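/- Let R be a root system in (ℝ^{n+2}, B) with multiplicity function k, positive subsystem R_+, and γ_k = Σ_{α∈R_+} k(α). Set w := −n/2 + 1 − γ_k and q(X) := B(X,X). Let g be a smooth function on ℝ^{n+2} \ {0} satisfying g(λX) = λ^{w−2} g(X) for all λ > 0. Then for every X ≠ 0 with B(X,X) = 0 and B(α,X) ≠ 0 for all α ∈ R_+: Δ_k(q·g)(X) = 0. Consequently, if two extensions f̃₁, f̃ of a w-homogeneous function on the null cone differ by q·g, then Δ_k f̃₁ and Δ_k f̃ agree on the null cone, so the restriction Δ_k|_C is independent of the chosen extension. -/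

import Mathlib

open scoped BigOperators
open Real

noncomputable section

/-- The middle index `i+1` in `Fin (n+2)` for `i : Fin n`
(coordinates are `X^0, X^1, …, X^n, X^∞`). -/
def mid (n : ℕ) (i : Fin n) : Fin (n + 2) := i.succ.castSucc

/-- The last index, corresponding to the coordinate `X^∞`. -/
def infIdx (n : ℕ) : Fin (n + 2) := Fin.last (n + 1)

/-- The symmetric bilinear form
`B(X,Y) = X^0 Y^∞ + X^∞ Y^0 + Σ_{i=1}^n X^i Y^i` of signature `(n+1,1)`. -/
def Bform (n : ℕ) (X Y : Fin (n + 2) → ℝ) : ℝ :=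
  X 0 * Y (infIdx n) + X (infIdx n) * Y 0 + ∑ i : Fin n, X (mid n i) * Y (mid n i)

/-- The reflection `R_α X = X − 2 (B(α,X)/B(α,α)) α`. -/
def reflct (n : ℕ) (α X : Fin (n + 2) → ℝ) : Fin (n + 2) → ℝ :=
  X - (2 * Bform n α X / Bform n α α) • α

/-- The `j`-th coordinate vector of the ambient space. -/
def basisVec (n : ℕ) (j : Fin (n + 2)) : Fin (n + 2) → ℝ := Pi.single j 1

/-- The ambient Laplacian `Δ̃ = 2 ∂_{X^0} ∂_{X^∞} + Σ_{i=1}^n ∂²_{X^i}`. -/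
def ambLap (n : ℕ) (f : (Fin (n + 2) → ℝ) → ℝ) (X : Fin (n + 2) → ℝ) : ℝ :=
  2 * fderiv ℝ (fun Y => fderiv ℝ f Y (basisVec n 0)) X (basisVec n (infIdx n))
    + ∑ i : Fin n,
        fderiv ℝ (fun Y => fderiv ℝ f Y (basisVec n (mid n i))) X (basisVec n (mid n i))

/-- The Dunkl–Laplace operator
`(Δ_k f)(X) = (Δ̃f)(X) + 2 Σ_{α∈R_+} k(α) [Df(X)(α)/B(α,X) − (f(X) − f(R_α X))/B(α,X)²]`. -/
def dunklLap (n : ℕ) (Rplus : Finset (Fin (n + 2) → ℝ)) (k : (Fin (n + 2) → ℝ) → ℝ)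
    (f : (Fin (n + 2) → ℝ) → ℝ) (X : Fin (n + 2) → ℝ) : ℝ :=
  ambLap n f X + 2 * ∑ α ∈ Rplus, k α *
    (fderiv ℝ f X α / Bform n α X - (f X - f (reflct n α X)) / (Bform n α X) ^ 2)

/-- The point `X(x) = (1, x_1, …, x_n, −½ Σ x_i²)` of the null cone. -/
def Xmap (n : ℕ) (x : Fin n → ℝ) : Fin (n + 2) → ℝ :=
  Fin.cons 1 (Fin.snoc (fun i => x i) (-(1 / 2) * ∑ i : Fin n, (x i) ^ 2))

/-- The ρ-independent `w`-homogeneous extension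
`f̃(X) = (X^0)^w f(X^1/X^0, …, X^n/X^0)`. -/
def ftil (n : ℕ) (w : ℝ) (f : (Fin n → ℝ) → ℝ) (X : Fin (n + 2) → ℝ) : ℝ :=
  (X 0) ^ w * f (fun i => X (mid n i) / X 0)

/-- A root system in `(ℝ^{n+2}, B)`: a finite set of non-null vectors with
`R ∩ ℝα = {α, −α}` and `R_α(R) = R` for all `α ∈ R`. -/
def IsRootSystem (n : ℕ) (R : Finset (Fin (n + 2) → ℝ)) : Prop :=
  (∀ α ∈ R, Bform n α α ≠ 0) ∧
  (∀ α ∈ R, -α ∈ R) ∧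
  (∀ α ∈ R, ∀ β ∈ R, (∃ c : ℝ, β = c • α) → β = α ∨ β = -α) ∧
  (∀ α ∈ R, ∀ β ∈ R, reflct n α β ∈ R)

/-- A multiplicity function: `k(R_β α) = k(α)` for all roots `α, β`. -/
def IsMultiplicity (n : ℕ) (R : Finset (Fin (n + 2) → ℝ))
    (k : (Fin (n + 2) → ℝ) → ℝ) : Prop :=
  ∀ α ∈ R, ∀ β ∈ R, k (reflct n β α) = k α

/-- A positive subsystem: `R` is the disjoint union of `R_+` and `−R_+`. -/
def IsPositive (n : ℕ) (R Rplus : Finset (Fin (n + 2) → ℝ)) : Prop :=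
  Rplus ⊆ R ∧ (∀ α ∈ R, α ∈ Rplus ∨ -α ∈ Rplus) ∧ (∀ α ∈ Rplus, -α ∉ Rplus)



lemma zero_ne_inf (n : ℕ) : (0 : Fin (n+2)) ≠ infIdx n := by
  simp [infIdx, Fin.ext_iff, Fin.last]
lemma mid_ne_zero (n : ℕ) (i : Fin n) : mid n i ≠ 0 := by
  simp [mid, Fin.ext_iff]
lemma mid_ne_inf (n : ℕ) (i : Fin n) : mid n i ≠ infIdx n := by
  simp [mid, infIdx, Fin.ext_iff, Fin.last]
  omega
lemma mid_inj (n : ℕ) {i j : Fin n} (h : mid n i = mid n j) : i = j := by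
  simpa [mid, Fin.ext_iff] using h

lemma Bform_symm (n : ℕ) (X Y : Fin (n+2) → ℝ) : Bform n X Y = Bform n Y X := by
  unfold Bform
  rw [Finset.sum_congr rfl fun i _ => mul_comm (X (mid n i)) (Y (mid n i))]
  ring

def BCLM (n : ℕ) (X : Fin (n+2) → ℝ) : (Fin (n+2) → ℝ) →L[ℝ] ℝ :=
  X 0 • ContinuousLinearMap.proj (infIdx n) + X (infIdx n) • ContinuousLinearMap.proj 0
    + ∑ i : Fin n, X (mid n i) • ContinuousLinearMap.proj (mid n i)

lemma BCLM_apply (n : ℕ) (X v : Fin (n+2) → ℝ) : BCLM n X v = Bform n X v := by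
  simp [BCLM, Bform, ContinuousLinearMap.sum_apply]

lemma hasFDerivAt_q (n : ℕ) (X : Fin (n+2) → ℝ) :
    HasFDerivAt (fun Y => Bform n Y Y) (2 • BCLM n X) X := by
  have hp := fun j : Fin (n+2) => hasFDerivAt_apply (𝕜 := ℝ) (F' := fun _ : Fin (n+2) => ℝ) j X
  have H := (((hp 0).mul (hp (infIdx n))).add ((hp (infIdx n)).mul (hp 0))).add
    (HasFDerivAt.fun_sum (fun i (_ : i ∈ Finset.univ) => (hp (mid n i)).mul (hp (mid n i))))
  refine H.congr_fderiv ?_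
  ext v
  simp [BCLM, Bform, ContinuousLinearMap.sum_apply, Finset.mul_sum, Finset.sum_add_distrib]
  simp only [two_mul, Finset.sum_add_distrib]
  ring

lemma Bform_basis0 (n : ℕ) (X : Fin (n+2) → ℝ) : Bform n X (basisVec n 0) = X (infIdx n) := by
  simp [Bform, basisVec, Pi.single_apply, (zero_ne_inf n).symm, fun i => (mid_ne_zero n i)]

lemma Bform_basisInf (n : ℕ) (X : Fin (n+2) → ℝ) :
    Bform n X (basisVec n (infIdx n)) = X 0 := by
  simp [Bform, basisVec, Pi.single_apply, zero_ne_inf n, fun i => (mid_ne_inf n i)]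

lemma Bform_basisMid (n : ℕ) (X : Fin (n+2) → ℝ) (i : Fin n) :
    Bform n X (basisVec n (mid n i)) = X (mid n i) := by
  simp only [Bform, basisVec, Pi.single_apply]
  rw [if_neg (mid_ne_inf n i).symm, if_neg (mid_ne_zero n i).symm]
  rw [Finset.sum_eq_single i]
  · simp
  · intro j _ hj
    rw [if_neg (fun h => hj (mid_inj n h)), mul_zero]
  · simp

lemma Bform_sub_smul (n : ℕ) (X α : Fin (n+2) → ℝ) (c : ℝ) :
    Bform n (X - c • α) (X - c • α)
      = Bform n X X - 2 * c * Bform n α X + c ^ 2 * Bform n α α := by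
  simp only [Bform, Pi.sub_apply, Pi.smul_apply, smul_eq_mul]
  rw [Finset.sum_congr rfl (fun i _ => by ring_nf :
    ∀ i ∈ Finset.univ, (X (mid n i) - c * α (mid n i)) * (X (mid n i) - c * α (mid n i))
      = X (mid n i) * X (mid n i) - 2 * c * (α (mid n i) * X (mid n i))
        + c ^ 2 * (α (mid n i) * α (mid n i)))]
  rw [Finset.sum_add_distrib, Finset.sum_sub_distrib, ← Finset.mul_sum, ← Finset.mul_sum]
  ring

lemma q_reflct (n : ℕ) (α X : Fin (n+2) → ℝ) (hα : Bform n α α ≠ 0) :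
    Bform n (reflct n α X) (reflct n α X) = Bform n X X := by
  rw [reflct, Bform_sub_smul]
  field_simp
  ring

lemma euler (n : ℕ) (w : ℝ) (g : (Fin (n+2) → ℝ) → ℝ)
    (hg : ContDiffOn ℝ (⊤ : ℕ∞) g {X : Fin (n + 2) → ℝ | X ≠ 0})
    (hghom : ∀ l : ℝ, 0 < l → ∀ X : Fin (n + 2) → ℝ, X ≠ 0 →
      g (l • X) = l ^ (w - 2) * g X)
    (X : Fin (n+2) → ℝ) (hX0 : X ≠ 0) :
    fderiv ℝ g X X = (w - 2) * g X := by
  have hU : IsOpen {Y : Fin (n+2) → ℝ | Y ≠ 0} := isOpen_ne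
  have hgd : DifferentiableAt ℝ g X :=
    (hg.contDiffAt (hU.mem_nhds hX0)).differentiableAt (by simp)
  have hψ : HasDerivAt (fun l : ℝ => l • X) X 1 := by
    simpa using (hasDerivAt_id (1:ℝ)).smul_const X
  have hφ : HasDerivAt (fun l : ℝ => g (l • X)) (fderiv ℝ g X X) 1 := by
    have h1 : HasFDerivAt g (fderiv ℝ g X) ((1:ℝ) • X) := by
      rw [one_smul]; exact hgd.hasFDerivAt
    have := h1.comp_hasDerivAt 1 ((hasDerivAt_id (1:ℝ)).smul_const X)
    rw [one_smul] at this
    exact this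
  have heq : (fun l : ℝ => g (l • X)) =ᶠ[nhds 1] fun l : ℝ => l ^ (w - 2) * g X := by
    filter_upwards [eventually_gt_nhds (by norm_num : (0:ℝ) < 1)] with l hl
    exact hghom l hl X hX0
  have hrhs : HasDerivAt (fun l : ℝ => l ^ (w - 2) * g X) ((w - 2) * g X) 1 := by
    have := (Real.hasDerivAt_rpow_const (x := (1:ℝ)) (p := w - 2)
      (Or.inl one_ne_zero)).mul_const (g X)
    simpa using this
  exact hφ.unique (hrhs.congr_of_eventuallyEq heq)

lemma fin_decomp (n : ℕ) (F : Fin (n+2) → ℝ) :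
    ∑ j : Fin (n+2), F j = F 0 + F (infIdx n) + ∑ i : Fin n, F (mid n i) := by
  rw [Fin.sum_univ_succ, Fin.sum_univ_castSucc]
  simp only [mid, infIdx, Fin.succ_last]
  rw [Finset.sum_congr rfl (fun i _ => by rw [Fin.succ_castSucc] :
    ∀ i ∈ Finset.univ, F (Fin.castSucc i).succ = F (i.succ.castSucc))]
  ring

lemma clm_decomp (n : ℕ) (L : (Fin (n+2) → ℝ) →L[ℝ] ℝ) (X : Fin (n+2) → ℝ) :
    L X = X 0 * L (basisVec n 0) + X (infIdx n) * L (basisVec n (infIdx n))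
      + ∑ i : Fin n, X (mid n i) * L (basisVec n (mid n i)) := by
  have hX : X = ∑ j : Fin (n+2), X j • basisVec n j := by
    ext j'
    rw [Finset.sum_apply]
    simp [basisVec, Pi.single_apply]
  calc L X = L (∑ j : Fin (n+2), X j • basisVec n j) := by rw [← hX]
    _ = ∑ j : Fin (n+2), X j * L (basisVec n j) := by
        rw [map_sum]; simp
    _ = _ := fin_decomp n _

lemma hasFDerivAt_qg (n : ℕ) (g : (Fin (n+2) → ℝ) → ℝ) (Y : Fin (n+2) → ℝ)
    (hgY : DifferentiableAt ℝ g Y) :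
    HasFDerivAt (fun Z => Bform n Z Z * g Z)
      (Bform n Y Y • fderiv ℝ g Y + g Y • (2 • BCLM n Y)) Y :=
  (hasFDerivAt_q n Y).mul hgY.hasFDerivAt

lemma fderiv_qg_apply (n : ℕ) (g : (Fin (n+2) → ℝ) → ℝ) (Y v : Fin (n+2) → ℝ)
    (hgY : DifferentiableAt ℝ g Y) :
    fderiv ℝ (fun Z => Bform n Z Z * g Z) Y v
      = Bform n Y Y * fderiv ℝ g Y v + g Y * (2 * Bform n Y v) := by
  rw [(hasFDerivAt_qg n g Y hgY).fderiv]
  simp [BCLM_apply]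

lemma second_qg (n : ℕ) (g : (Fin (n+2) → ℝ) → ℝ)
    (hg : ContDiffOn ℝ (⊤ : ℕ∞) g {X : Fin (n + 2) → ℝ | X ≠ 0})
    (X v : Fin (n+2) → ℝ) (hX0 : X ≠ 0) :
    HasFDerivAt (fun Y => fderiv ℝ (fun Z => Bform n Z Z * g Z) Y v)
      ((Bform n X X • fderiv ℝ (fun Y => fderiv ℝ g Y v) X
          + fderiv ℝ g X v • (2 • BCLM n X))
        + (g X • (2 • BCLM n v) + (2 * Bform n X v) • fderiv ℝ g X)) X := by
  have hU : IsOpen {Y : Fin (n+2) → ℝ | Y ≠ 0} := isOpen_ne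
  have hgd : ∀ Y : Fin (n+2) → ℝ, Y ≠ 0 → DifferentiableAt ℝ g Y := fun Y hY =>
    (hg.contDiffAt (hU.mem_nhds hY)).differentiableAt (by simp)
  have hG1 : ContDiffOn ℝ (⊤ : ℕ∞) (fderiv ℝ g) {Y : Fin (n+2) → ℝ | Y ≠ 0} :=
    hg.fderiv_of_isOpen hU (by simp)
  have hG1X : DifferentiableAt ℝ (fun Y => fderiv ℝ g Y v) X :=
    ((hG1.contDiffAt (hU.mem_nhds hX0)).differentiableAt (by simp)).clm_apply
      (differentiableAt_const v)
  have hlin : HasFDerivAt (fun Y : Fin (n+2) → ℝ => 2 * Bform n Y v) (2 • BCLM n v) X := by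
    have hfe : (fun Y : Fin (n+2) → ℝ => 2 * Bform n Y v) = fun Y => (2 • BCLM n v) Y := by
      funext Y
      simp [BCLM_apply, Bform_symm n v Y]
    rw [hfe]
    exact (2 • BCLM n v).hasFDerivAt
  have hA : HasFDerivAt (fun Y => Bform n Y Y * fderiv ℝ g Y v)
      (Bform n X X • fderiv ℝ (fun Y => fderiv ℝ g Y v) X
        + fderiv ℝ g X v • (2 • BCLM n X)) X :=
    (hasFDerivAt_q n X).mul hG1X.hasFDerivAt
  have hB : HasFDerivAt (fun Y => g Y * (2 * Bform n Y v))
      (g X • (2 • BCLM n v) + (2 * Bform n X v) • fderiv ℝ g X) X :=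
    (hgd X hX0).hasFDerivAt.mul hlin
  refine (hA.add hB).congr_of_eventuallyEq ?_
  filter_upwards [hU.mem_nhds hX0] with Y hY
  exact fderiv_qg_apply n g Y v (hgd Y hY)

lemma second_qg_apply (n : ℕ) (g : (Fin (n+2) → ℝ) → ℝ)
    (hg : ContDiffOn ℝ (⊤ : ℕ∞) g {X : Fin (n + 2) → ℝ | X ≠ 0})
    (X u v : Fin (n+2) → ℝ) (hX0 : X ≠ 0) (hXC : Bform n X X = 0) :
    fderiv ℝ (fun Y => fderiv ℝ (fun Z => Bform n Z Z * g Z) Y v) X u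
      = 2 * Bform n X u * fderiv ℝ g X v + 2 * Bform n X v * fderiv ℝ g X u
        + 2 * Bform n v u * g X := by
  rw [(second_qg n g hg X v hX0).fderiv]
  simp [BCLM_apply, hXC]
  ring

lemma part1 (n : ℕ) (Rplus : Finset (Fin (n + 2) → ℝ)) (k : (Fin (n + 2) → ℝ) → ℝ)
    (hαα : ∀ α ∈ Rplus, Bform n α α ≠ 0)
    (w : ℝ) (hw : w = -(n : ℝ) / 2 + 1 - ∑ α ∈ Rplus, k α)
    (g : (Fin (n + 2) → ℝ) → ℝ)
    (hg : ContDiffOn ℝ (⊤ : ℕ∞) g {X : Fin (n + 2) → ℝ | X ≠ 0})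
    (hghom : ∀ l : ℝ, 0 < l → ∀ X : Fin (n + 2) → ℝ, X ≠ 0 →
      g (l • X) = l ^ (w - 2) * g X)
    (X : Fin (n + 2) → ℝ) (hX0 : X ≠ 0) (hXC : Bform n X X = 0)
    (hXα : ∀ α ∈ Rplus, Bform n α X ≠ 0) :
    dunklLap n Rplus k (fun Y => Bform n Y Y * g Y) X = 0 := by
  have hU : IsOpen {Y : Fin (n+2) → ℝ | Y ≠ 0} := isOpen_ne
  have hgX : DifferentiableAt ℝ g X :=
    (hg.contDiffAt (hU.mem_nhds hX0)).differentiableAt (by simp)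
  have amb : ambLap n (fun Y => Bform n Y Y * g Y) X
      = 4 * ((w - 2) * g X) + (4 + 2 * (n : ℝ)) * g X := by
    unfold ambLap
    rw [second_qg_apply n g hg X (basisVec n (infIdx n)) (basisVec n 0) hX0 hXC]
    rw [Finset.sum_congr rfl (fun i _ =>
      second_qg_apply n g hg X (basisVec n (mid n i)) (basisVec n (mid n i)) hX0 hXC)]
    rw [Bform_basisInf, Bform_basis0]
    have hB00 : Bform n (basisVec n 0) (basisVec n (infIdx n)) = 1 := by
      rw [Bform_basisInf]; simp [basisVec]
    have hBmm : ∀ i : Fin n, Bform n (basisVec n (mid n i)) (basisVec n (mid n i)) = 1 := by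
      intro i; rw [Bform_basisMid]; simp [basisVec]
    rw [hB00]
    rw [Finset.sum_congr rfl (fun i _ => by rw [Bform_basisMid, hBmm i]; ring :
      ∀ i ∈ Finset.univ,
        2 * Bform n X (basisVec n (mid n i)) * fderiv ℝ g X (basisVec n (mid n i))
          + 2 * Bform n X (basisVec n (mid n i)) * fderiv ℝ g X (basisVec n (mid n i))
          + 2 * Bform n (basisVec n (mid n i)) (basisVec n (mid n i)) * g X
        = 4 * (X (mid n i) * fderiv ℝ g X (basisVec n (mid n i))) + 2 * g X)]
    have hde : fderiv ℝ g X X = (w - 2) * g X := euler n w g hg hghom X hX0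
    rw [clm_decomp n (fderiv ℝ g X) X] at hde
    rw [Finset.sum_add_distrib, ← Finset.mul_sum, Finset.sum_const, Finset.card_univ]
    simp only [Fintype.card_fin, nsmul_eq_mul]
    rw [← hde]
    ring
  have hαterm : ∀ α ∈ Rplus, k α *
      (fderiv ℝ (fun Y => Bform n Y Y * g Y) X α / Bform n α X
        - ((fun Y => Bform n Y Y * g Y) X
            - (fun Y => Bform n Y Y * g Y) (reflct n α X)) / (Bform n α X) ^ 2)
      = k α * (2 * g X) := by
    intro α hα
    have h1 : fderiv ℝ (fun Y => Bform n Y Y * g Y) X α = g X * (2 * Bform n α X) := by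
      rw [fderiv_qg_apply n g X α hgX, hXC, Bform_symm n X α]; ring
    have h2 : Bform n (reflct n α X) (reflct n α X) = 0 := by
      rw [q_reflct n α X (hαα α hα), hXC]
    simp only [h1, h2, hXC, zero_mul, sub_zero, sub_self, zero_div]
    field_simp [hXα α hα]
  unfold dunklLap
  rw [amb, Finset.sum_congr rfl hαterm]
  rw [← Finset.sum_mul]
  subst hw
  ring

lemma dunkl_add (n : ℕ) (Rplus : Finset (Fin (n + 2) → ℝ)) (k : (Fin (n + 2) → ℝ) → ℝ)
    (g : (Fin (n + 2) → ℝ) → ℝ)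
    (hg : ContDiffOn ℝ (⊤ : ℕ∞) g {X : Fin (n + 2) → ℝ | X ≠ 0})
    (ft : (Fin (n + 2) → ℝ) → ℝ)
    (hft : ContDiffOn ℝ (⊤ : ℕ∞) ft {X : Fin (n + 2) → ℝ | X ≠ 0})
    (X : Fin (n + 2) → ℝ) (hX0 : X ≠ 0) :
    dunklLap n Rplus k (fun Y => ft Y + Bform n Y Y * g Y) X
      = dunklLap n Rplus k ft X
        + dunklLap n Rplus k (fun Y => Bform n Y Y * g Y) X := by
  have hU : IsOpen {Y : Fin (n+2) → ℝ | Y ≠ 0} := isOpen_ne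
  have hgd : ∀ Y : Fin (n+2) → ℝ, Y ≠ 0 → DifferentiableAt ℝ g Y := fun Y hY =>
    (hg.contDiffAt (hU.mem_nhds hY)).differentiableAt (by simp)
  have hftd : ∀ Y : Fin (n+2) → ℝ, Y ≠ 0 → DifferentiableAt ℝ ft Y := fun Y hY =>
    (hft.contDiffAt (hU.mem_nhds hY)).differentiableAt (by simp)
  have hhd : ∀ Y : Fin (n+2) → ℝ, Y ≠ 0 →
      DifferentiableAt ℝ (fun Z => Bform n Z Z * g Z) Y := fun Y hY =>
    (hasFDerivAt_qg n g Y (hgd Y hY)).differentiableAt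
  have step1 : ∀ Y : Fin (n+2) → ℝ, Y ≠ 0 →
      fderiv ℝ (fun Z => ft Z + Bform n Z Z * g Z) Y
        = fderiv ℝ ft Y + fderiv ℝ (fun Z => Bform n Z Z * g Z) Y := fun Y hY =>
    fderiv_add (hftd Y hY) (hhd Y hY)
  have hft2 : ContDiffOn ℝ (⊤ : ℕ∞) (fderiv ℝ ft) {Y : Fin (n+2) → ℝ | Y ≠ 0} :=
    hft.fderiv_of_isOpen hU (by simp)
  have secadd : ∀ u v : Fin (n+2) → ℝ,
      fderiv ℝ (fun Y => fderiv ℝ (fun Z => ft Z + Bform n Z Z * g Z) Y v) X u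
        = fderiv ℝ (fun Y => fderiv ℝ ft Y v) X u
          + fderiv ℝ (fun Y => fderiv ℝ (fun Z => Bform n Z Z * g Z) Y v) X u := by
    intro u v
    have dft : DifferentiableAt ℝ (fun Y => fderiv ℝ ft Y v) X :=
      ((hft2.contDiffAt (hU.mem_nhds hX0)).differentiableAt (by simp)).clm_apply
        (differentiableAt_const v)
    have dh : DifferentiableAt ℝ (fun Y => fderiv ℝ (fun Z => Bform n Z Z * g Z) Y v) X :=
      (second_qg n g hg X v hX0).differentiableAt
    have heq : (fun Y => fderiv ℝ (fun Z => ft Z + Bform n Z Z * g Z) Y v)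
        =ᶠ[nhds X] fun Y => fderiv ℝ ft Y v
          + fderiv ℝ (fun Z => Bform n Z Z * g Z) Y v := by
      filter_upwards [hU.mem_nhds hX0] with Y hY
      rw [step1 Y hY]
      simp
    rw [heq.fderiv_eq, fderiv_fun_add dft dh]
    simp
  have ambadd : ambLap n (fun Z => ft Z + Bform n Z Z * g Z) X
      = ambLap n ft X + ambLap n (fun Z => Bform n Z Z * g Z) X := by
    unfold ambLap
    rw [secadd, Finset.sum_congr rfl (fun i _ => secadd _ _), Finset.sum_add_distrib]
    ring
  unfold dunklLap
  rw [ambadd, step1 X hX0]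
  rw [Finset.sum_congr rfl (fun α _ => by simp; ring :
    ∀ α ∈ Rplus, k α *
      ((fderiv ℝ ft X + fderiv ℝ (fun Z => Bform n Z Z * g Z) X) α / Bform n α X
        - ((fun Z => ft Z + Bform n Z Z * g Z) X
            - (fun Z => ft Z + Bform n Z Z * g Z) (reflct n α X)) / (Bform n α X) ^ 2)
      = k α * (fderiv ℝ ft X α / Bform n α X
          - (ft X - ft (reflct n α X)) / (Bform n α X) ^ 2)
        + k α * (fderiv ℝ (fun Z => Bform n Z Z * g Z) X α / Bform n α X
          - ((fun Z => Bform n Z Z * g Z) X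
              - (fun Z => Bform n Z Z * g Z) (reflct n α X)) / (Bform n α X) ^ 2))]
  rw [Finset.sum_add_distrib]
  ring

/-- for `w = −n/2 + 1 − γ_k`, `q(X) = B(X,X)` and `g` smooth away from
the origin and homogeneous of degree `w − 2`, one has `Δ_k(q·g)(X) = 0` at every point
`X` of the null cone with `B(α,X) ≠ 0` for all `α ∈ R_+`. Consequently, if two
extensions of a `w`-homogeneous function differ by `q·g`, their images under `Δ_k`
agree on the null cone. -/
theorem stmt11 (n : ℕ) (hn : 1 ≤ n)
    (R Rplus : Finset (Fin (n + 2) → ℝ)) (k : (Fin (n + 2) → ℝ) → ℝ)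
    (hR : IsRootSystem n R) (hk : IsMultiplicity n R k) (hP : IsPositive n R Rplus)
    (w : ℝ) (hw : w = -(n : ℝ) / 2 + 1 - ∑ α ∈ Rplus, k α)
    (g : (Fin (n + 2) → ℝ) → ℝ)
    (hg : ContDiffOn ℝ (⊤ : ℕ∞) g {X : Fin (n + 2) → ℝ | X ≠ 0})
    (hghom : ∀ l : ℝ, 0 < l → ∀ X : Fin (n + 2) → ℝ, X ≠ 0 →
      g (l • X) = l ^ (w - 2) * g X)
    (X : Fin (n + 2) → ℝ) (hX0 : X ≠ 0) (hXC : Bform n X X = 0)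
    (hXα : ∀ α ∈ Rplus, Bform n α X ≠ 0) :
    dunklLap n Rplus k (fun Y => Bform n Y Y * g Y) X = 0 ∧
    ∀ ft ft1 : (Fin (n + 2) → ℝ) → ℝ,
      ContDiffOn ℝ (⊤ : ℕ∞) ft {X : Fin (n + 2) → ℝ | X ≠ 0} →
      (∀ Y, ft1 Y = ft Y + Bform n Y Y * g Y) →
      dunklLap n Rplus k ft1 X = dunklLap n Rplus k ft X := by
  have hαα : ∀ α ∈ Rplus, Bform n α α ≠ 0 := fun α hα => hR.1 α (hP.1 hα)
  have p1 := part1 n Rplus k hαα w hw g hg hghom X hX0 hXC hXα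
  refine ⟨p1, ?_⟩
  intro ft ft1 hft hcond
  have hfe : ft1 = fun Y => ft Y + Bform n Y Y * g Y := funext hcond
  rw [hfe, dunkl_add n Rplus k g hg ft hft X hX0, p1, add_zero]
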